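/- arXiv:2405.10274 — 6 statements merged into one kernel-verified Lean document; each statement's English description precedes it below -/
import Mathlib

section
/- If 0 ≤ M ≤ N are positive semidefinite operators on a bipartite Hilbert space X ⊗ Y (with ≤ the Loewner order), then the Frobenius (Hilbert–Schmidt) norm of the partial trace over Y satisfies ‖Tr_Y M‖₂ ≤ ‖Tr_Y N‖₂. -/
open Matrix
open scoped ComplexOrder

/-- Frobenius (Hilbert–Schmidt) norm of a square complex matrix. -/
noncomputable def frobNorm {m : Type*} [Fintype m] (A : Matrix m m ℂ) : ℝ :=
  Real.sqrt (∑ i, ∑ j, ‖A i j‖ ^ 2)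

/-- Partial trace over the second (Y) factor of a bipartite operator. -/
noncomputable def ptraceY {X Y : Type*} [Fintype Y] (M : Matrix (X × Y) (X × Y) ℂ) : Matrix X X ℂ :=
  Matrix.of fun x x' => ∑ y, M (x, y) (x', y)

set_option linter.unusedSectionVars false

lemma ptraceY_posSemidef {X Y : Type*} [Fintype X] [Fintype Y] [DecidableEq X] [DecidableEq Y]
    (M : Matrix (X × Y) (X × Y) ℂ) (hM : M.PosSemidef) :
    (ptraceY M).PosSemidef := by
  refine PosSemidef.of_dotProduct_mulVec_nonneg ?_ ?_
  · ext x x'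
    simp only [conjTranspose_apply, ptraceY, of_apply, star_sum]
    exact Finset.sum_congr rfl fun y _ => hM.1.apply (x, y) (x', y)
  · intro v
    have inner : ∀ y : Y,
        star (fun p : X × Y => if p.2 = y then v p.1 else 0) ⬝ᵥ
          (M *ᵥ (fun p : X × Y => if p.2 = y then v p.1 else 0))
        = ∑ x, ∑ x', star (v x) * (M (x, y) (x', y) * v x') := by
      intro y
      simp only [dotProduct, mulVec, Fintype.sum_prod_type, Pi.star_apply, apply_ite, star_zero,
        ite_mul, zero_mul, mul_ite, mul_zero, Finset.sum_ite_eq', Finset.mem_univ, if_true,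
        dotProduct, Finset.mul_sum]
      simp [Finset.sum_ite_eq]
    have key : star v ⬝ᵥ (ptraceY M *ᵥ v)
        = ∑ y, star (fun p : X × Y => if p.2 = y then v p.1 else 0) ⬝ᵥ
            (M *ᵥ (fun p : X × Y => if p.2 = y then v p.1 else 0)) := by
      rw [Finset.sum_congr rfl fun y (_ : y ∈ Finset.univ) => inner y]
      simp only [dotProduct, mulVec, ptraceY, of_apply, Pi.star_apply]
      simp_rw [Finset.sum_mul, Finset.mul_sum]
      conv_rhs => rw [Finset.sum_comm]
      exact Finset.sum_congr rfl fun x _ => Finset.sum_comm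
    rw [key]
    exact Finset.sum_nonneg fun y _ => hM.dotProduct_mulVec_nonneg _

lemma trace_nonneg' {n : Type*} [Fintype n] [DecidableEq n] {A : Matrix n n ℂ}
    (hA : A.PosSemidef) : 0 ≤ A.trace := by
  rw [trace]
  refine Finset.sum_nonneg fun i _ => ?_
  have := hA.dotProduct_mulVec_nonneg (Pi.single i 1)
  simpa [dotProduct, mulVec, Pi.single_apply, Finset.sum_ite_eq, diag] using this

open scoped MatrixOrder in
lemma trace_mul_nonneg' {n : Type*} [Fintype n] [DecidableEq n] {A C : Matrix n n ℂ}
    (hA : A.PosSemidef) (hC : C.PosSemidef) :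
    0 ≤ (A * C).trace := by
  obtain ⟨B, hB⟩ := CStarAlgebra.nonneg_iff_eq_star_mul_self.mp hA.nonneg
  rw [hB, mul_assoc, trace_mul_comm]
  exact trace_nonneg' (hC.mul_mul_conjTranspose_same B)

lemma frob_sq_eq {n : Type*} [Fintype n] {A : Matrix n n ℂ} (hA : A.IsHermitian) :
    ∑ i, ∑ j, ‖A i j‖ ^ 2 = (A * A).trace.re := by
  have : (A * A).trace = ∑ i, ∑ j, (‖A i j‖ ^ 2 : ℂ) := by
    rw [trace]
    refine Finset.sum_congr rfl fun i _ => ?_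
    simp only [diag, mul_apply]
    refine Finset.sum_congr rfl fun j _ => ?_
    rw [← hA.apply j i, mul_comm]
    have : star (A i j) * A i j = (‖A i j‖ ^ 2 : ℝ) := by
      rw [Complex.star_def, ← Complex.normSq_eq_conj_mul_self, Complex.normSq_eq_norm_sq]
    rw [this]
    push_cast
    rfl
  rw [this]
  simp [← Complex.ofReal_pow]

/-- If 0 ≤ M ≤ N in the Loewner order, then ‖Tr_Y M‖₂ ≤ ‖Tr_Y N‖₂. -/
theorem frobNorm_ptraceY_mono {X Y : Type*} [Fintype X] [Fintype Y]
    [DecidableEq X] [DecidableEq Y]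
    (M N : Matrix (X × Y) (X × Y) ℂ)
    (hM : M.PosSemidef) (hMN : (N - M).PosSemidef) :
    frobNorm (ptraceY M) ≤ frobNorm (ptraceY N) := by
  set A := ptraceY M with hAdef
  set B := ptraceY N with hBdef
  have hN : N.PosSemidef := by
    have := hMN.add hM
    simpa using this
  have hA : A.PosSemidef := ptraceY_posSemidef M hM
  have hB : B.PosSemidef := ptraceY_posSemidef N hN
  have hsub : B - A = ptraceY (N - M) := by
    ext x x'
    simp [hAdef, hBdef, ptraceY, Finset.sum_sub_distrib]
  have hBA : (B - A).PosSemidef := hsub ▸ ptraceY_posSemidef (N - M) hMN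
  have h1 : 0 ≤ ((B - A) * B).trace := trace_mul_nonneg' hBA hB
  have h2 : 0 ≤ (A * (B - A)).trace := trace_mul_nonneg' hA hBA
  have hdecomp : B * B = A * A + ((B - A) * B + A * (B - A)) := by
    noncomm_ring
  have htr : (A * A).trace ≤ (B * B).trace := by
    rw [hdecomp, trace_add, trace_add]
    exact le_add_of_nonneg_right (add_nonneg h1 h2)
  have hre : (A * A).trace.re ≤ (B * B).trace.re := (Complex.le_def.mp htr).1
  rw [frobNorm, frobNorm, frob_sq_eq hA.1, frob_sq_eq hB.1]
  exact Real.sqrt_le_sqrt hre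
end

section
/- Every permutation σ ∈ S_{2t} with exactly s elements of {1,…,t} mapped outside {1,…,t} can be written as σ = (σ_X × σ_Y) ∘ σ_s ∘ (σ_X' × σ_Y') for some permutations σ_X, σ_Y, σ_X', σ_Y' of {1,…,t}, where σ_X × σ_Y denotes the permutation of {1,…,2t} acting as σ_X on {1,…,t} and as σ_Y (shifted by t) on {t+1,…,2t}, and σ_s is the fixed permutation that swaps i with t+i for i ∈ {1,…,s} and fixes all other points. -/
open Finset Equiv

/-- Subtype of right elements of a sum is equivalent to the right type. -/
def rightEquiv (α β : Type*) : {x : α ⊕ β // x.isRight} ≃ β where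
  toFun x := x.1.getRight x.2
  invFun b := ⟨Sum.inr b, rfl⟩
  left_inv := by rintro ⟨(a | b), h⟩ <;> simp_all
  right_inv b := rfl

lemma card_filter_lt {t s : ℕ} (hs : s ≤ t) :
    (Finset.univ.filter (fun j : Fin t => j.val < s)).card = s := by
  rw [← Fintype.card_subtype]
  exact Fintype.card_congr ⟨fun x => ⟨x.1.1, x.2⟩, fun y => ⟨⟨y.1, lt_of_lt_of_le y.2 hs⟩, y.2⟩,
    fun x => rfl, fun y => rfl⟩ |>.trans (Fintype.card_fin s)

lemma card_right_filter {t s : ℕ} (hs : s ≤ t) (σ : Equiv.Perm (Fin t ⊕ Fin t))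
    (hσ : (Finset.univ.filter (fun i : Fin t => (σ (Sum.inl i)).isRight)).card = s) :
    (Finset.univ.filter (fun i : Fin t => (σ (Sum.inr i)).isLeft)).card = s := by
  have htot : Fintype.card {x : Fin t ⊕ Fin t // (σ x).isRight} = t := by
    have e : {x : Fin t ⊕ Fin t // (σ x).isRight} ≃ {y : Fin t ⊕ Fin t // y.isRight} :=
      σ.subtypeEquiv (fun x => Iff.rfl)
    rw [Fintype.card_congr (e.trans (rightEquiv _ _)), Fintype.card_fin]
  have hsplit : Fintype.card {x : Fin t ⊕ Fin t // (σ x).isRight} =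
      Fintype.card {i : Fin t // (σ (Sum.inl i)).isRight} +
      Fintype.card {i : Fin t // (σ (Sum.inr i)).isRight} := by
    rw [Fintype.card_congr (Equiv.subtypeSum (p := fun x => (σ x).isRight)), Fintype.card_sum]
  have h1 : Fintype.card {i : Fin t // (σ (Sum.inl i)).isRight} = s := by
    rw [Fintype.card_subtype]; exact hσ
  have h2 : Fintype.card {i : Fin t // (σ (Sum.inr i)).isRight} = t - s := by omega
  have h3 : Fintype.card {i : Fin t // (σ (Sum.inr i)).isLeft} =
      Fintype.card {i : Fin t // ¬ (σ (Sum.inr i)).isRight} :=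
    Fintype.card_congr (Equiv.subtypeEquivRight (fun i => (Sum.not_isRight).symm))
  rw [← Fintype.card_subtype, h3, Fintype.card_subtype_compl, h2, Fintype.card_fin]
  omega

lemma exists_perm_mem_iff {t : ℕ} (A S : Finset (Fin t)) (h : A.card = S.card) :
    ∃ p : Equiv.Perm (Fin t), ∀ i, p i ∈ S ↔ i ∈ A := by
  have e1 : {x // x ∈ A} ≃ {x // x ∈ S} := Fintype.equivOfCardEq (by simp [h])
  have e2 : {x // ¬ x ∈ A} ≃ {x // ¬ x ∈ S} := Fintype.equivOfCardEq (by
    rw [Fintype.card_subtype_compl, Fintype.card_subtype_compl]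
    simp [Fintype.card_coe, h])
  refine ⟨(Equiv.sumCompl (· ∈ A)).symm.trans ((e1.sumCongr e2).trans (Equiv.sumCompl (· ∈ S))), ?_⟩
  intro i
  by_cases hi : i ∈ A
  · simp [Equiv.sumCompl_symm_apply_of_pos (p := (· ∈ A)) hi, hi, (e1 ⟨i, hi⟩).2]
  · simp [Equiv.sumCompl_symm_apply_of_neg (p := (· ∈ A)) hi, hi, (e2 ⟨i, hi⟩).2]

/-- The permutation σ_s of {1,…,t} ⊕ {1,…,t} swapping the i-th element of the
left block with the i-th element of the right block for i < s, fixing the rest. -/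
def sigmaSwap (t s : ℕ) : Equiv.Perm (Fin t ⊕ Fin t) where
  toFun := fun x => match x with
    | Sum.inl i => if i.val < s then Sum.inr i else Sum.inl i
    | Sum.inr i => if i.val < s then Sum.inl i else Sum.inr i
  invFun := fun x => match x with
    | Sum.inl i => if i.val < s then Sum.inr i else Sum.inl i
    | Sum.inr i => if i.val < s then Sum.inl i else Sum.inr i
  left_inv := by rintro (i | i) <;> by_cases h : i.val < s <;> simp [h]
  right_inv := by rintro (i | i) <;> by_cases h : i.val < s <;> simp [h]

/-- Every permutation of the 2t points with exactly s left-block elements mapped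
to the right block factors as (σ_X × σ_Y) ∘ σ_s ∘ (σ_X' × σ_Y'). -/
theorem perm_factorization (t s : ℕ) (hs : s ≤ t) (σ : Equiv.Perm (Fin t ⊕ Fin t))
    (hσ : (Finset.univ.filter (fun i : Fin t => (σ (Sum.inl i)).isRight)).card = s) :
    ∃ σX σY σX' σY' : Equiv.Perm (Fin t),
      σ = (Equiv.sumCongr σX σY) * (sigmaSwap t s) * (Equiv.sumCongr σX' σY') := by
  classical
  set A : Finset (Fin t) := Finset.univ.filter (fun i => (σ (Sum.inl i)).isRight) with hA
  set B : Finset (Fin t) := Finset.univ.filter (fun i => (σ (Sum.inr i)).isLeft) with hB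
  set S : Finset (Fin t) := Finset.univ.filter (fun j : Fin t => j.val < s) with hSdef
  have hScard : S.card = s := card_filter_lt hs
  obtain ⟨p, hp⟩ := exists_perm_mem_iff A S (by rw [hσ, hScard])
  obtain ⟨q, hq⟩ := exists_perm_mem_iff B S (by rw [card_right_filter hs σ hσ, hScard])
  set τ : Equiv.Perm (Fin t ⊕ Fin t) := σ * (Equiv.sumCongr p q)⁻¹ * (sigmaSwap t s)⁻¹ with hτ
  have memS : ∀ j : Fin t, j ∈ S ↔ j.val < s := by intro j; simp [hSdef]
  have hswap_inv : ∀ x, (sigmaSwap t s)⁻¹ x = (sigmaSwap t s) x := by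
    rintro (i | i) <;> rfl
  have hL : ∀ i, (τ (Sum.inl i)).isLeft := by
    intro i
    rw [hτ]
    simp only [Equiv.Perm.mul_apply, hswap_inv]
    by_cases h : i.val < s
    · have : sigmaSwap t s (Sum.inl i) = Sum.inr i := by simp [sigmaSwap, h]
      rw [this]
      simp only [Equiv.Perm.inv_def, Equiv.sumCongr_symm, Equiv.sumCongr_apply, Sum.map_inr]
      have hmem : q.symm i ∈ B := by
        rw [← hq (q.symm i), Equiv.apply_symm_apply]; exact (memS i).mpr h
      rw [hB] at hmem; simpa using hmem
    · have : sigmaSwap t s (Sum.inl i) = Sum.inl i := by simp [sigmaSwap, h]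
      rw [this]
      simp only [Equiv.Perm.inv_def, Equiv.sumCongr_symm, Equiv.sumCongr_apply, Sum.map_inl]
      have hmem : p.symm i ∉ A := by
        rw [← hp (p.symm i), Equiv.apply_symm_apply]
        exact fun hx => h ((memS i).mp hx)
      rw [hA] at hmem
      simp only [Finset.mem_filter, Finset.mem_univ, true_and] at hmem
      rwa [← Sum.not_isRight]
  have hR : ∀ i, (τ (Sum.inr i)).isRight := by
    intro i
    rw [hτ]
    simp only [Equiv.Perm.mul_apply, hswap_inv]
    by_cases h : i.val < s
    · have : sigmaSwap t s (Sum.inr i) = Sum.inl i := by simp [sigmaSwap, h]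
      rw [this]
      simp only [Equiv.Perm.inv_def, Equiv.sumCongr_symm, Equiv.sumCongr_apply, Sum.map_inl]
      have hmem : p.symm i ∈ A := by
        rw [← hp (p.symm i), Equiv.apply_symm_apply]; exact (memS i).mpr h
      rw [hA] at hmem; simpa using hmem
    · have : sigmaSwap t s (Sum.inr i) = Sum.inr i := by simp [sigmaSwap, h]
      rw [this]
      simp only [Equiv.Perm.inv_def, Equiv.sumCongr_symm, Equiv.sumCongr_apply, Sum.map_inr]
      have hmem : q.symm i ∉ B := by
        rw [← hq (q.symm i), Equiv.apply_symm_apply]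
        exact fun hx => h ((memS i).mp hx)
      rw [hB] at hmem
      simp only [Finset.mem_filter, Finset.mem_univ, true_and] at hmem
      rwa [← Sum.not_isLeft]
  have hL' : ∀ j, (τ.symm (Sum.inl j)).isLeft := by
    intro j
    cases h : τ.symm (Sum.inl j) with
    | inl k => rfl
    | inr k =>
      exfalso
      have := hR k
      rw [← h, Equiv.apply_symm_apply] at this
      simp at this
  have hR' : ∀ j, (τ.symm (Sum.inr j)).isRight := by
    intro j
    cases h : τ.symm (Sum.inr j) with
    | inr k => rfl
    | inl k =>
      exfalso
      have := hL k
      rw [← h, Equiv.apply_symm_apply] at this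
      simp at this
  let σX : Equiv.Perm (Fin t) :=
    { toFun := fun i => (τ (Sum.inl i)).getLeft (hL i)
      invFun := fun j => (τ.symm (Sum.inl j)).getLeft (hL' j)
      left_inv := by
        intro i
        have h1 : Sum.inl ((τ (Sum.inl i)).getLeft (hL i)) = τ (Sum.inl i) := Sum.inl_getLeft _ _
        have : τ.symm (Sum.inl ((τ (Sum.inl i)).getLeft (hL i))) = Sum.inl i := by
          rw [h1, Equiv.symm_apply_apply]
        simp only [this]; rfl
      right_inv := by
        intro j
        have h1 : Sum.inl ((τ.symm (Sum.inl j)).getLeft (hL' j)) = τ.symm (Sum.inl j) :=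
          Sum.inl_getLeft _ _
        have : τ (Sum.inl ((τ.symm (Sum.inl j)).getLeft (hL' j))) = Sum.inl j := by
          rw [h1, Equiv.apply_symm_apply]
        simp only [this]; rfl }
  let σY : Equiv.Perm (Fin t) :=
    { toFun := fun i => (τ (Sum.inr i)).getRight (hR i)
      invFun := fun j => (τ.symm (Sum.inr j)).getRight (hR' j)
      left_inv := by
        intro i
        have h1 : Sum.inr ((τ (Sum.inr i)).getRight (hR i)) = τ (Sum.inr i) := Sum.inr_getRight _ _
        have : τ.symm (Sum.inr ((τ (Sum.inr i)).getRight (hR i))) = Sum.inr i := by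
          rw [h1, Equiv.symm_apply_apply]
        simp only [this]; rfl
      right_inv := by
        intro j
        have h1 : Sum.inr ((τ.symm (Sum.inr j)).getRight (hR' j)) = τ.symm (Sum.inr j) :=
          Sum.inr_getRight _ _
        have : τ (Sum.inr ((τ.symm (Sum.inr j)).getRight (hR' j))) = Sum.inr j := by
          rw [h1, Equiv.apply_symm_apply]
        simp only [this]; rfl }
  have hτeq : τ = Equiv.sumCongr σX σY := by
    ext x
    cases x with
    | inl i => exact (Sum.inl_getLeft _ (hL i)).symm
    | inr i => exact (Sum.inr_getRight _ (hR i)).symm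
  refine ⟨σX, σY, p, q, ?_⟩
  rw [← hτeq, hτ]
  group
end

section
/- For real numbers t ≥ 1 and d > 0, the sum ∑_{s=1}^{t} C(t,s)² · s! · d^{−s} is at most e^{t²/d} − 1, and in particular is O(t²/d) when t²/d is bounded. -/
/-- ∑_{s=1}^{t} C(t,s)² · s! · d^{−s} ≤ e^{t²/d} − 1. -/
theorem binom_factorial_sum_le (t : ℕ) (ht : 1 ≤ t) (d : ℝ) (hd : 0 < d) :
    ∑ s ∈ Finset.Icc 1 t, (t.choose s : ℝ) ^ 2 * (s.factorial : ℝ) / d ^ s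
      ≤ Real.exp ((t : ℝ) ^ 2 / d) - 1 := by
  have hx : (0:ℝ) ≤ (t : ℝ) / d := by positivity
  have step1 : ∑ s ∈ Finset.Icc 1 t, (t.choose s : ℝ) ^ 2 * (s.factorial : ℝ) / d ^ s
      ≤ ∑ s ∈ Finset.Icc 1 t, (t.choose s : ℝ) * ((t:ℝ)/d) ^ s := by
    apply Finset.sum_le_sum
    intro s hs
    have h1 : (t.choose s : ℝ) * (s.factorial : ℝ) ≤ (t:ℝ)^s := by
      have h0 := Nat.descFactorial_le_pow t s
      have h2 : t.choose s * s.factorial = t.descFactorial s := by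
        rw [Nat.descFactorial_eq_factorial_mul_choose, Nat.mul_comm]
      calc (t.choose s : ℝ) * (s.factorial : ℝ) = ((t.choose s * s.factorial : ℕ) : ℝ) := by
            push_cast; ring
        _ ≤ ((t^s : ℕ) : ℝ) := by exact_mod_cast h2 ▸ h0
        _ = (t:ℝ)^s := by push_cast; ring
    have hds : (0:ℝ) < d ^ s := by positivity
    rw [div_le_iff₀ hds, div_pow]
    have e : (t.choose s : ℝ) * ((t:ℝ)^s / d^s) * d^s = (t.choose s : ℝ) * (t:ℝ)^s := by
      field_simp
    rw [e]
    calc (t.choose s : ℝ) ^ 2 * (s.factorial : ℝ)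
        = (t.choose s : ℝ) * ((t.choose s : ℝ) * (s.factorial : ℝ)) := by ring
      _ ≤ (t.choose s : ℝ) * (t:ℝ)^s :=
          mul_le_mul_of_nonneg_left h1 (by positivity)
  have hins : Finset.range (t+1) = insert 0 (Finset.Icc 1 t) := by
    ext x; simp [Finset.mem_range, Finset.mem_Icc]; omega
  have step2 : ∑ s ∈ Finset.Icc 1 t, (t.choose s : ℝ) * ((t:ℝ)/d) ^ s
      = ((t:ℝ)/d + 1)^t - 1 := by
    have hpow : ((t:ℝ)/d + 1)^t
        = ∑ s ∈ Finset.range (t+1), (t.choose s : ℝ) * ((t:ℝ)/d) ^ s := by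
      rw [add_pow]
      exact Finset.sum_congr rfl fun s hs => by ring
    rw [hpow, hins, Finset.sum_insert (by simp)]
    simp
  have step3 : ((t:ℝ)/d + 1)^t ≤ Real.exp ((t:ℝ)^2/d) := by
    have h1 : 1 + (t:ℝ)/d ≤ Real.exp ((t:ℝ)/d) := by
      have := Real.add_one_le_exp ((t:ℝ)/d); linarith
    calc ((t:ℝ)/d + 1)^t ≤ (Real.exp ((t:ℝ)/d))^t :=
          pow_le_pow_left₀ (by positivity) (by linarith) t
      _ = Real.exp ((t:ℝ)/d * t) := by rw [← Real.exp_nat_mul]; ring_nf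
      _ = Real.exp ((t:ℝ)^2/d) := by ring_nf
  linarith [step1, step2, step3]
end

section
/- Let E, E_B, E_C be events in a probability space such that P(E) = 1/2, P(E_B ∣ E) = P(E_B ∣ Eᶜ), and P(E_C ∣ E) = P(E_C ∣ Eᶜ), and suppose P(E_B ∧ E_C ∣ E) ≥ 1/2 + ε. Then P(E_B ∧ E_C) + P(E_Bᶜ ∧ E_Cᶜ) ≥ 1/2 + ε. -/
open MeasureTheory ProbabilityTheory

lemma split_toReal' {Ω : Type*} [MeasurableSpace Ω] (μ : Measure Ω) [IsFiniteMeasure μ]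
    (A B : Set Ω) (hB : MeasurableSet B) :
    (μ A).toReal = (μ (A ∩ B)).toReal + (μ (A ∩ Bᶜ)).toReal := by
  rw [← Set.diff_eq, ← ENNReal.toReal_add (measure_ne_top _ _) (measure_ne_top _ _),
    measure_inter_add_diff A hB]

lemma split4' {Ω : Type*} [MeasurableSpace Ω] (μ : Measure Ω) [IsFiniteMeasure μ]
    (A B C : Set Ω) (hB : MeasurableSet B) (hC : MeasurableSet C) :
    (μ A).toReal = (μ (A ∩ (B ∩ C))).toReal + (μ (A ∩ (B ∩ Cᶜ))).toReal
      + (μ (A ∩ (Bᶜ ∩ C))).toReal + (μ (A ∩ (Bᶜ ∩ Cᶜ))).toReal := by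
  rw [split_toReal' μ A B hB, split_toReal' μ (A ∩ B) C hC, split_toReal' μ (A ∩ Bᶜ) C hC,
    Set.inter_assoc, Set.inter_assoc, Set.inter_assoc, Set.inter_assoc]
  ring

/-- Probabilistic core of the correlated simultaneous Goldreich–Levin reduction:
if P(E) = 1/2, the marginals of E_B and E_C are unaffected by conditioning on E
(no-signalling), and P(E_B ∩ E_C ∣ E) ≥ 1/2 + ε, then
P(E_B ∩ E_C) + P(E_Bᶜ ∩ E_Cᶜ) ≥ 1/2 + ε. -/
theorem correlated_gl_core {Ω : Type*} [MeasurableSpace Ω]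
    (μ : Measure Ω) [IsProbabilityMeasure μ]
    (E EB EC : Set Ω)
    (hE : MeasurableSet E) (hEB : MeasurableSet EB) (hEC : MeasurableSet EC)
    (hEhalf : μ E = 1 / 2)
    (hB : (μ[|E]) EB = (μ[|Eᶜ]) EB)
    (hC : (μ[|E]) EC = (μ[|Eᶜ]) EC)
    (ε : ℝ)
    (hgood : 1 / 2 + ε ≤ ((μ[|E]) (EB ∩ EC)).toReal) :
    1 / 2 + ε ≤ (μ (EB ∩ EC)).toReal + (μ (EBᶜ ∩ ECᶜ)).toReal := by
  have hEc : μ Eᶜ = 1 / 2 := by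
    rw [measure_compl hE (measure_ne_top μ E), measure_univ, hEhalf, one_div,
      ENNReal.one_sub_inv_two]
  have condE : ∀ A : Set Ω, ((μ[|E]) A).toReal = 2 * (μ (E ∩ A)).toReal := by
    intro A
    rw [cond_apply hE μ A, hEhalf, ENNReal.toReal_mul]
    norm_num
  have condEc : ∀ A : Set Ω, ((μ[|Eᶜ]) A).toReal = 2 * (μ (Eᶜ ∩ A)).toReal := by
    intro A
    rw [cond_apply hE.compl μ A, hEc, ENNReal.toReal_mul]
    norm_num
  have hB' : (μ (E ∩ EB)).toReal = (μ (Eᶜ ∩ EB)).toReal := by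
    have h1 := condE EB
    have h2 := condEc EB
    rw [hB, h2] at h1
    linarith
  have hC' : (μ (E ∩ EC)).toReal = (μ (Eᶜ ∩ EC)).toReal := by
    have h1 := condE EC
    have h2 := condEc EC
    rw [hC, h2] at h1
    linarith
  have hsE := split4' μ E EB EC hEB hEC
  have hsEc := split4' μ Eᶜ EB EC hEB hEC
  have hrE : (μ E).toReal = 1 / 2 := by rw [hEhalf]; norm_num
  have hrEc : (μ Eᶜ).toReal = 1 / 2 := by rw [hEc]; norm_num
  -- splits for the no-signalling hypotheses
  have hBE : (μ (E ∩ EB)).toReal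
      = (μ (E ∩ (EB ∩ EC))).toReal + (μ (E ∩ (EB ∩ ECᶜ))).toReal := by
    rw [split_toReal' μ (E ∩ EB) EC hEC, Set.inter_assoc, Set.inter_assoc]
  have hBEc : (μ (Eᶜ ∩ EB)).toReal
      = (μ (Eᶜ ∩ (EB ∩ EC))).toReal + (μ (Eᶜ ∩ (EB ∩ ECᶜ))).toReal := by
    rw [split_toReal' μ (Eᶜ ∩ EB) EC hEC, Set.inter_assoc, Set.inter_assoc]
  have hcomm : ∀ A : Set Ω, A ∩ (EC ∩ EB) = A ∩ (EB ∩ EC) := by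
    intro A; rw [Set.inter_comm EC EB]
  have hCE : (μ (E ∩ EC)).toReal
      = (μ (E ∩ (EB ∩ EC))).toReal + (μ (E ∩ (EBᶜ ∩ EC))).toReal := by
    rw [split_toReal' μ (E ∩ EC) EB hEB, Set.inter_assoc, Set.inter_assoc, hcomm]
    congr 2
    rw [Set.inter_comm EC EBᶜ]
  have hCEc : (μ (Eᶜ ∩ EC)).toReal
      = (μ (Eᶜ ∩ (EB ∩ EC))).toReal + (μ (Eᶜ ∩ (EBᶜ ∩ EC))).toReal := by
    rw [split_toReal' μ (Eᶜ ∩ EC) EB hEB, Set.inter_assoc, Set.inter_assoc, hcomm]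
    congr 2
    rw [Set.inter_comm EC EBᶜ]
  -- splits for the goal
  have hg1 : (μ (EB ∩ EC)).toReal
      = (μ (E ∩ (EB ∩ EC))).toReal + (μ (Eᶜ ∩ (EB ∩ EC))).toReal := by
    rw [split_toReal' μ (EB ∩ EC) E hE, Set.inter_comm (EB ∩ EC) E,
      Set.inter_comm (EB ∩ EC) Eᶜ]
  have hg2 : (μ (EBᶜ ∩ ECᶜ)).toReal
      = (μ (E ∩ (EBᶜ ∩ ECᶜ))).toReal + (μ (Eᶜ ∩ (EBᶜ ∩ ECᶜ))).toReal := by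
    rw [split_toReal' μ (EBᶜ ∩ ECᶜ) E hE, Set.inter_comm (EBᶜ ∩ ECᶜ) E,
      Set.inter_comm (EBᶜ ∩ ECᶜ) Eᶜ]
  rw [condE (EB ∩ EC)] at hgood
  have n1 : (0:ℝ) ≤ (μ (Eᶜ ∩ (EBᶜ ∩ ECᶜ))).toReal := ENNReal.toReal_nonneg
  linarith
end

section
/- Let x be a random variable in {0,1}ⁿ and suppose random variables (b_B, b_C) produced by two parties given inputs (r, b) and (r', b') satisfy: when b, b' are uniform bits with the correlation b ⊕ b' = ⟨r,x⟩ ⊕ ⟨r',x⟩, the pair outputs (⟨r,x⟩, ⟨r',x⟩) with probability ≥ 1/2 + ε. Then the modified parties that sample b and b' independently and uniformly output a pair (b_B', b_C') with b_B' ⊕ b_C' = ⟨r,x⟩ ⊕ ⟨r',x⟩ with probability ≥ 1/2 + ε. -/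
open scoped ENNReal

/-- Inner product mod 2 on {0,1}ⁿ, as a Bool. -/
def ip {n : ℕ} (r x : Fin n → Bool) : Bool :=
  decide (Odd (Finset.univ.filter (fun i => r i && x i)).card)

/-- The correlated experiment: b, b' are uniform bits satisfying
b ⊕ b' = ⟨r,x⟩ ⊕ ⟨r',x⟩; success means the pair outputs (⟨r,x⟩, ⟨r',x⟩). -/
noncomputable def expCorrelated {n : ℕ} (Dx : PMF (Fin n → Bool))
    (A : (Fin n → Bool) → Bool → (Fin n → Bool) → Bool → PMF (Bool × Bool)) :
    PMF Bool := do
  let x ← Dx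
  let r ← PMF.uniformOfFintype (Fin n → Bool)
  let r' ← PMF.uniformOfFintype (Fin n → Bool)
  let b ← PMF.uniformOfFintype Bool
  let o ← A r b r' (xor b (xor (ip r x) (ip r' x)))
  PMF.pure (decide (o.1 = ip r x ∧ o.2 = ip r' x))

/-- The uncorrelated experiment: b, b' independent uniform; success means the
outputs satisfy b_B ⊕ b_C = ⟨r,x⟩ ⊕ ⟨r',x⟩. -/
noncomputable def expIndependent {n : ℕ} (Dx : PMF (Fin n → Bool))
    (A : (Fin n → Bool) → Bool → (Fin n → Bool) → Bool → PMF (Bool × Bool)) :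
    PMF Bool := do
  let x ← Dx
  let r ← PMF.uniformOfFintype (Fin n → Bool)
  let r' ← PMF.uniformOfFintype (Fin n → Bool)
  let b ← PMF.uniformOfFintype Bool
  let b' ← PMF.uniformOfFintype Bool
  let o ← A r b r' b'
  PMF.pure (decide (xor o.1 o.2 = xor (ip r x) (ip r' x)))

/- ### Auxiliary lemmas -/

lemma aux_bindpure (μ : PMF (Bool × Bool)) (f : Bool × Bool → Bool) :
    (μ.bind fun o => PMF.pure (f o)) true
      = ∑ o : Bool × Bool, μ o * (if f o then 1 else 0) := by
  rw [PMF.bind_apply, tsum_fintype]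
  refine Finset.sum_congr rfl fun o _ => ?_
  rw [PMF.pure_apply]
  by_cases h : f o <;> simp [h]

lemma aux_total (μ : PMF (Bool × Bool)) (u v : Bool) :
    μ (u,v) + μ (u,!v) + μ (!u,v) + μ (!u,!v) = 1 := by
  have h := μ.tsum_coe
  rw [tsum_fintype, Fintype.sum_prod_type] at h
  simp only [Fintype.sum_bool] at h
  cases u <;> cases v <;> simp only [Bool.not_true, Bool.not_false] <;> rw [← h] <;> ring

lemma aux_marg1 (μ : PMF (Bool × Bool)) (u v : Bool) :
    (μ.map Prod.fst) u = μ (u, v) + μ (u, !v) := by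
  rw [PMF.map_apply, tsum_fintype, Fintype.sum_prod_type]
  cases u <;> cases v <;> simp [Fintype.sum_bool] <;> ring

lemma aux_marg2 (μ : PMF (Bool × Bool)) (u v : Bool) :
    (μ.map Prod.snd) v = μ (u, v) + μ (!u, v) := by
  rw [PMF.map_apply, tsum_fintype, Fintype.sum_prod_type]
  cases u <;> cases v <;> simp [Fintype.sum_bool] <;> ring

/-- Probability that the XOR of the outputs equals `xor u v`. -/
noncomputable def pS (μ : PMF (Bool × Bool)) (u v : Bool) : ℝ≥0∞ := μ (u, v) + μ (!u, !v)

lemma aux_pS_eval (μ : PMF (Bool × Bool)) (u v : Bool) :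
    (μ.bind fun o => PMF.pure (decide (xor o.1 o.2 = xor u v))) true = pS μ u v := by
  rw [aux_bindpure, Fintype.sum_prod_type]
  simp only [Fintype.sum_bool]
  cases u <;> cases v <;> simp [pS] <;> ring

lemma aux_pT_eval (μ : PMF (Bool × Bool)) (u v : Bool) :
    (μ.bind fun o => PMF.pure (decide (o.1 = u ∧ o.2 = v))) true = μ (u, v) := by
  rw [aux_bindpure, Fintype.sum_prod_type]
  simp only [Fintype.sum_bool]
  cases u <;> cases v <;> simp

lemma aux_idI (μ : PMF (Bool × Bool)) (u v : Bool) :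
    pS μ u v + ((μ.map Prod.fst) u + (μ.map Prod.snd) v) = 2 * μ (u, v) + 1 := by
  rw [aux_marg1 μ u v, aux_marg2 μ u v, ← aux_total μ u v, pS]; ring

lemma aux_idII (μ : PMF (Bool × Bool)) (u v : Bool) :
    (μ.map Prod.fst) u + (μ.map Prod.snd) v ≤ pS μ u v + 1 := by
  rw [aux_marg1 μ u v, aux_marg2 μ u v, ← aux_total μ u v, pS]
  calc μ (u,v) + μ (u,!v) + (μ (u,v) + μ (!u,v))
      ≤ μ (u,v) + μ (u,!v) + (μ (u,v) + μ (!u,v)) + (μ (!u,!v) + μ (!u,!v)) := le_self_add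
    _ = μ (u,v) + μ (!u,!v) + (μ (u,v) + μ (u,!v) + μ (!u,v) + μ (!u,!v)) := by ring

lemma aux_core (W : Bool → Bool → PMF (Bool × Bool)) (u v c : Bool)
    (hB : ∀ b b' b'', (W b b').map Prod.fst = (W b b'').map Prod.fst)
    (hC : ∀ b b' b'', (W b b').map Prod.snd = (W b'' b').map Prod.snd) :
    2 * (W false c (u, v) + W true (!c) (u, v)) ≤
      pS (W false false) u v + pS (W false true) u v +
      pS (W true false) u v + pS (W true true) u v := by
  have e1 := aux_idI (W false c) u v
  have e2 := aux_idI (W true (!c)) u v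
  have i1 := aux_idII (W false (!c)) u v
  have i2 := aux_idII (W true c) u v
  rw [hB false (!c) c, hC false (!c) true] at i1
  rw [hB true c (!c), hC true c false] at i2
  have key : 2 * (W false c (u, v) + W true (!c) (u, v)) + 2 ≤
      (pS (W false c) u v + pS (W true (!c)) u v +
       pS (W false (!c)) u v + pS (W true c) u v) + 2 := by
    calc 2 * (W false c (u, v) + W true (!c) (u, v)) + 2
        = (2 * W false c (u, v) + 1) + (2 * W true (!c) (u, v) + 1) := by ring
      _ = pS (W false c) u v + pS (W true (!c)) u v +
          (((W false c).map Prod.fst u + (W false c).map Prod.snd v) +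
           ((W true (!c)).map Prod.fst u + (W true (!c)).map Prod.snd v)) := by
            rw [← e1, ← e2]; ring
      _ ≤ pS (W false c) u v + pS (W true (!c)) u v +
          ((pS (W false (!c)) u v + 1) + (pS (W true c) u v + 1)) := by
            refine add_le_add_right ?_ _
            calc ((W false c).map Prod.fst u + (W false c).map Prod.snd v) +
                    ((W true (!c)).map Prod.fst u + (W true (!c)).map Prod.snd v)
                  = ((W false c).map Prod.fst u + (W true (!c)).map Prod.snd v) +
                    ((W true (!c)).map Prod.fst u + (W false c).map Prod.snd v) := by ring
              _ ≤ (pS (W false (!c)) u v + 1) + (pS (W true c) u v + 1) := add_le_add i1 i2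
      _ = (pS (W false c) u v + pS (W true (!c)) u v +
           pS (W false (!c)) u v + pS (W true c) u v) + 2 := by ring
  have key2 := (ENNReal.add_le_add_iff_right (by norm_num : (2:ℝ≥0∞) ≠ ⊤)).mp key
  refine le_trans key2 (le_of_eq ?_)
  cases c <;> simp <;> ring

lemma aux_unifBool (f : Bool → PMF Bool) :
    ((PMF.uniformOfFintype Bool).bind f) true
      = 2⁻¹ * f false true + 2⁻¹ * f true true := by
  rw [PMF.bind_apply, tsum_bool]
  simp [PMF.uniformOfFintype_apply]

lemma aux_bind_mono {α β : Type*} (p : PMF α) (f g : α → PMF β) (t : β)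
    (h : ∀ a, f a t ≤ g a t) : p.bind f t ≤ p.bind g t := by
  rw [PMF.bind_apply, PMF.bind_apply]
  exact ENNReal.tsum_le_tsum fun a => mul_le_mul_right (h a) _

/-- The key pointwise inequality, for fixed `r`, `r'`, target bits `u`, `v`. -/
lemma aux_inner (W : Bool → Bool → PMF (Bool × Bool)) (u v : Bool)
    (hB : ∀ b b' b'', (W b b').map Prod.fst = (W b b'').map Prod.fst)
    (hC : ∀ b b' b'', (W b b').map Prod.snd = (W b'' b').map Prod.snd) :
    ((PMF.uniformOfFintype Bool).bind fun b =>
      (W b (xor b (xor u v))).bind fun o =>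
        PMF.pure (decide (o.1 = u ∧ o.2 = v))) true ≤
    ((PMF.uniformOfFintype Bool).bind fun b =>
      (PMF.uniformOfFintype Bool).bind fun b' =>
        (W b b').bind fun o =>
          PMF.pure (decide (xor o.1 o.2 = xor u v))) true := by
  set c := xor u v with hc
  have hL : ((PMF.uniformOfFintype Bool).bind fun b =>
      (W b (xor b c)).bind fun o => PMF.pure (decide (o.1 = u ∧ o.2 = v))) true
      = 2⁻¹ * (W false c) (u, v) + 2⁻¹ * (W true (!c)) (u, v) := by
    rw [aux_unifBool]
    simp only [Bool.false_xor, Bool.true_xor]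
    rw [aux_pT_eval, aux_pT_eval]
  have hR : ((PMF.uniformOfFintype Bool).bind fun b =>
      (PMF.uniformOfFintype Bool).bind fun b' =>
        (W b b').bind fun o => PMF.pure (decide (xor o.1 o.2 = c))) true
      = 2⁻¹ * (2⁻¹ * pS (W false false) u v + 2⁻¹ * pS (W false true) u v)
        + 2⁻¹ * (2⁻¹ * pS (W true false) u v + 2⁻¹ * pS (W true true) u v) := by
    rw [aux_unifBool]
    rw [aux_unifBool (fun b' => (W false b').bind fun o => PMF.pure (decide (xor o.1 o.2 = c)))]
    rw [aux_unifBool (fun b' => (W true b').bind fun o => PMF.pure (decide (xor o.1 o.2 = c)))]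
    rw [hc, aux_pS_eval, aux_pS_eval, aux_pS_eval, aux_pS_eval]
  rw [hL, hR]
  have hcore := aux_core W u v c hB hC
  have h4 := mul_le_mul_right hcore (4⁻¹ : ℝ≥0∞)
  have e2 : (4:ℝ≥0∞)⁻¹ * 2 = 2⁻¹ := by
    rw [show (4:ℝ≥0∞) = 2 * 2 by norm_num, ENNReal.mul_inv (by norm_num) (by norm_num),
      mul_assoc, ENNReal.inv_mul_cancel (by norm_num) (by norm_num), mul_one]
  have e4 : (2:ℝ≥0∞)⁻¹ * 2⁻¹ = 4⁻¹ := by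
    rw [show (4:ℝ≥0∞) = 2 * 2 by norm_num, ENNReal.mul_inv (by norm_num) (by norm_num)]
  calc 2⁻¹ * (W false c) (u, v) + 2⁻¹ * (W true (!c)) (u, v)
      = 4⁻¹ * (2 * ((W false c) (u, v) + (W true (!c)) (u, v))) := by
        rw [← mul_assoc, e2]; ring
    _ ≤ 4⁻¹ * (pS (W false false) u v + pS (W false true) u v +
          pS (W true false) u v + pS (W true true) u v) := h4
    _ = 2⁻¹ * (2⁻¹ * pS (W false false) u v + 2⁻¹ * pS (W false true) u v)
        + 2⁻¹ * (2⁻¹ * pS (W true false) u v + 2⁻¹ * pS (W true true) u v) := by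
        rw [← e4]; ring

/-- If a no-signalling pair of parties, given correlated uniform bits b, b' with
b ⊕ b' = ⟨r,x⟩ ⊕ ⟨r',x⟩, outputs (⟨r,x⟩, ⟨r',x⟩) with probability ≥ 1/2 + ε,
then with independent uniform bits they output a pair XOR-ing to
⟨r,x⟩ ⊕ ⟨r',x⟩ with probability ≥ 1/2 + ε. -/
theorem correlated_to_uncorrelated {n : ℕ}
    (Dx : PMF (Fin n → Bool))
    (A : (Fin n → Bool) → Bool → (Fin n → Bool) → Bool → PMF (Bool × Bool))
    (hnsB : ∀ r b r' b' r'' b'',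
      (A r b r' b').map Prod.fst = (A r b r'' b'').map Prod.fst)
    (hnsC : ∀ r b r' b' r'' b'',
      (A r b r' b').map Prod.snd = (A r'' b'' r' b').map Prod.snd)
    (ε : ℝ≥0∞)
    (hsucc : 1 / 2 + ε ≤ expCorrelated Dx A true) :
    1 / 2 + ε ≤ expIndependent Dx A true := by
  refine le_trans hsucc ?_
  show (Dx.bind fun x => (PMF.uniformOfFintype (Fin n → Bool)).bind fun r =>
      (PMF.uniformOfFintype (Fin n → Bool)).bind fun r' =>
        (PMF.uniformOfFintype Bool).bind fun b =>
          (A r b r' (xor b (xor (ip r x) (ip r' x)))).bind fun o =>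
            PMF.pure (decide (o.1 = ip r x ∧ o.2 = ip r' x))) true
    ≤ (Dx.bind fun x => (PMF.uniformOfFintype (Fin n → Bool)).bind fun r =>
      (PMF.uniformOfFintype (Fin n → Bool)).bind fun r' =>
        (PMF.uniformOfFintype Bool).bind fun b =>
          (PMF.uniformOfFintype Bool).bind fun b' =>
            (A r b r' b').bind fun o =>
              PMF.pure (decide (xor o.1 o.2 = xor (ip r x) (ip r' x)))) true
  refine aux_bind_mono _ _ _ _ fun x => ?_
  refine aux_bind_mono _ _ _ _ fun r => ?_
  refine aux_bind_mono _ _ _ _ fun r' => ?_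
  exact aux_inner (fun b b' => A r b r' b') (ip r x) (ip r' x)
    (fun b b' b'' => hnsB r b r' b' r' b'')
    (fun b b' b'' => hnsC r b r' b' r b'')
end

section
/- Let d ≥ 1, t ≥ 1, and suppose M is a projection on H_{B₁} ⊗ (ℂ^d) and N a projection on H_{C₁} ⊗ (ℂ^d), where dim H_{B₁} = dim H_{C₁} = D. If Ω is the unnormalized maximally entangled operator on H_{B₁} ⊗ H_{C₁} and F the swap on the two ℂ^d factors, then |Tr[((σ^{1/2}⊗id) M (σ^{1/2}⊗id) ⊗ N)(Ω ⊗ F)]| ≤ d^{3/2} for any density matrix σ on H_{B₁}. -/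
open Matrix
open scoped Kronecker ComplexOrder

/-- The unnormalized maximally entangled operator Ω = ∑_{i,j} |i⟩⟨j| ⊗ |i⟩⟨j|. -/
def maxEnt (D : ℕ) : Matrix (Fin D × Fin D) (Fin D × Fin D) ℂ :=
  Matrix.of fun p q => if p.1 = p.2 ∧ q.1 = q.2 then 1 else 0

/-- The swap operator F on ℂ^d ⊗ ℂ^d. -/
def swapOp (d : ℕ) : Matrix (Fin d × Fin d) (Fin d × Fin d) ℂ :=
  Matrix.of fun p q => if p.1 = q.2 ∧ p.2 = q.1 then 1 else 0

/-- The old Mathlib `Matrix.PosSemidef.sqrt` (removed since), with its old definition. -/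
noncomputable def posSemidefSqrt {D : ℕ} {σ : Matrix (Fin D) (Fin D) ℂ} (hA : σ.PosSemidef) :
    Matrix (Fin D) (Fin D) ℂ :=
  (hA.1.eigenvectorUnitary : Matrix (Fin D) (Fin D) ℂ) *
    diagonal ((↑) ∘ Real.sqrt ∘ hA.1.eigenvalues) *
    (star (hA.1.eigenvectorUnitary : Matrix (Fin D) (Fin D) ℂ))

private lemma trace_formula (D d : ℕ) (A N : Matrix (Fin D × Fin d) (Fin D × Fin d) ℂ) :
    ((A ⊗ₖ N) *
        (Matrix.reindex (Equiv.prodProdProdComm (Fin D) (Fin D) (Fin d) (Fin d))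
          (Equiv.prodProdProdComm (Fin D) (Fin D) (Fin d) (Fin d))
          (maxEnt D ⊗ₖ swapOp d))).trace
    = ∑ a : Fin D, ∑ c : Fin D, ∑ α : Fin d, ∑ β : Fin d,
        A (a,α) (c,β) * N (a,β) (c,α) := by
  simp only [Matrix.trace, Matrix.diag, Matrix.mul_apply, Matrix.reindex_apply,
    Matrix.submatrix_apply, Matrix.kroneckerMap_apply, maxEnt, swapOp,
    Equiv.prodProdProdComm_symm, Equiv.prodProdProdComm_apply, Matrix.of_apply,
    Fintype.sum_prod_type]
  simp only [mul_ite, ite_mul, one_mul, zero_mul, mul_one, mul_zero,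
    Finset.sum_ite_eq, Finset.sum_ite_eq', Finset.mem_univ, if_true, ite_and,
    Finset.sum_ite_irrel, Finset.sum_const_zero]
  exact Finset.sum_congr rfl fun a _ =>
    Eq.trans (Finset.sum_congr rfl fun α _ => Finset.sum_comm) Finset.sum_comm

private lemma trace_cts {n : Type*} [Fintype n] (X : Matrix n n ℂ) :
    (Xᴴ * X).trace
      = ((∑ i : n, ∑ j : n, ‖X i j‖ ^ 2 : ℝ) : ℂ) := by
  push_cast
  rw [Matrix.trace, Finset.sum_comm]
  refine Finset.sum_congr rfl fun j _ => ?_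
  rw [Matrix.diag_apply, Matrix.mul_apply]
  refine Finset.sum_congr rfl fun i _ => ?_
  rw [Matrix.conjTranspose_apply, Complex.star_def, mul_comm, Complex.mul_conj]
  norm_cast
  exact (Complex.sq_norm _).symm

private lemma proj_frob {n : Type*} [Fintype n] [DecidableEq n]
    (P W : Matrix n n ℂ) (hP2 : P * P = P) (hPh : Pᴴ = P) (hWh : Wᴴ = W) :
    ((P * W)ᴴ * (P * W)).trace ≤ (W * W).trace := by
  have hproj : (1 - P) * (1 - P) = 1 - P := by
    rw [sub_mul, one_mul, mul_sub, mul_one, hP2]; abel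
  have h1 : (P * W)ᴴ * (P * W) = W * (P * W) := by
    rw [Matrix.conjTranspose_mul, hPh, hWh, Matrix.mul_assoc, ← Matrix.mul_assoc P P W, hP2]
  have h2 : ((1 - P) * W)ᴴ * ((1 - P) * W) = W * W - W * (P * W) := by
    have hq : (1 - P)ᴴ = 1 - P := by
      rw [Matrix.conjTranspose_sub, Matrix.conjTranspose_one, hPh]
    rw [Matrix.conjTranspose_mul, hq, hWh, Matrix.mul_assoc,
      ← Matrix.mul_assoc (1 - P) (1 - P) W, hproj, sub_mul, one_mul, mul_sub]
  have h3 : 0 ≤ (((1 - P) * W)ᴴ * ((1 - P) * W)).trace := by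
    rw [trace_cts]
    rw [Complex.zero_le_real]
    exact Finset.sum_nonneg fun i _ => Finset.sum_nonneg fun j _ => sq_nonneg _
  rw [h2, Matrix.trace_sub, sub_nonneg] at h3
  rwa [h1]

private lemma splitS (D d : ℕ) (B N : Matrix (Fin D × Fin d) (Fin D × Fin d) ℂ)
    (s : Matrix (Fin D) (Fin D) ℂ) :
    (∑ a : Fin D, ∑ c : Fin D, ∑ α : Fin d, ∑ β : Fin d,
        (B * (s ⊗ₖ (1 : Matrix (Fin d) (Fin d) ℂ))) (a,α) (c,β) * N (a,β) (c,α))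
    = ∑ a : Fin D, ∑ c : Fin D, ∑ α : Fin d, ∑ β : Fin d,
        B (a,α) (c,β) * (N * (s ⊗ₖ (1 : Matrix (Fin d) (Fin d) ℂ))ᵀ) (a,β) (c,α) := by
  simp only [Matrix.mul_apply, Matrix.kroneckerMap_apply, Matrix.transpose_apply,
    Matrix.one_apply, Fintype.sum_prod_type, mul_ite, ite_mul, one_mul, zero_mul,
    mul_one, mul_zero, Finset.sum_ite_eq, Finset.sum_ite_eq', Finset.mem_univ,
    if_true, Finset.sum_ite_irrel, Finset.sum_const_zero, Finset.sum_mul,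
    Finset.mul_sum]
  refine Finset.sum_congr rfl fun a _ => ?_
  have pull : ∀ (G : Fin d → Fin d → Fin D → ℂ),
      (∑ α : Fin d, ∑ β : Fin d, ∑ e : Fin D, G α β e)
        = ∑ e : Fin D, ∑ α : Fin d, ∑ β : Fin d, G α β e :=
    fun G => Eq.trans (Finset.sum_congr rfl fun α _ => Finset.sum_comm) Finset.sum_comm
  calc (∑ c : Fin D, ∑ α : Fin d, ∑ β : Fin d, ∑ e : Fin D,
          B (a, α) (e, β) * s e c * N (a, β) (c, α))
      = ∑ c : Fin D, ∑ e : Fin D, ∑ α : Fin d, ∑ β : Fin d,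
          B (a, α) (e, β) * s e c * N (a, β) (c, α) :=
        Finset.sum_congr rfl fun c _ => pull _
    _ = ∑ e : Fin D, ∑ c : Fin D, ∑ α : Fin d, ∑ β : Fin d,
          B (a, α) (e, β) * s e c * N (a, β) (c, α) := Finset.sum_comm
    _ = ∑ c : Fin D, ∑ e : Fin D, ∑ α : Fin d, ∑ β : Fin d,
          B (a, α) (c, β) * (N (a, β) (e, α) * s c e) := by
        refine Finset.sum_congr rfl fun c _ => Finset.sum_congr rfl fun e _ =>
          Finset.sum_congr rfl fun α _ => Finset.sum_congr rfl fun β _ => by ring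
    _ = ∑ c : Fin D, ∑ α : Fin d, ∑ β : Fin d, ∑ e : Fin D,
          B (a, α) (c, β) * (N (a, β) (e, α) * s c e) :=
        Finset.sum_congr rfl fun c _ => (pull _).symm

private lemma frob_reorder (D d : ℕ) (X : Matrix (Fin D × Fin d) (Fin D × Fin d) ℂ) :
    (∑ a : Fin D, ∑ c : Fin D, ∑ α : Fin d, ∑ β : Fin d, ‖X (a,α) (c,β)‖ ^ 2)
      = ∑ i : Fin D × Fin d, ∑ j : Fin D × Fin d, ‖X i j‖ ^ 2 := by
  simp only [Fintype.sum_prod_type]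
  exact Finset.sum_congr rfl fun a _ => Finset.sum_comm

private lemma main_bound (D d : ℕ)
    (M N : Matrix (Fin D × Fin d) (Fin D × Fin d) ℂ)
    (hM2 : M * M = M) (hMh : M.conjTranspose = M)
    (hN2 : N * N = N) (hNh : N.conjTranspose = N)
    (s : Matrix (Fin D) (Fin D) ℂ) (hsh : sᴴ = s) (htrs : (s * s).trace = 1) :
    ‖∑ a : Fin D, ∑ c : Fin D, ∑ α : Fin d, ∑ β : Fin d,
        ((s ⊗ₖ (1 : Matrix (Fin d) (Fin d) ℂ)) * M * (s ⊗ₖ (1 : Matrix (Fin d) (Fin d) ℂ)))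
          (a,α) (c,β) * N (a,β) (c,α)‖
      ≤ (d : ℝ) * Real.sqrt (d : ℝ) := by
  classical
  set S := s ⊗ₖ (1 : Matrix (Fin d) (Fin d) ℂ) with hSdef
  -- S is Hermitian
  have hSh : Sᴴ = S := by
    ext p q
    obtain ⟨a, α⟩ := p; obtain ⟨b, β⟩ := q
    simp only [hSdef, Matrix.conjTranspose_apply, Matrix.kroneckerMap_apply, star_mul']
    rw [← Matrix.conjTranspose_apply, hsh, ← Matrix.conjTranspose_apply,
      Matrix.conjTranspose_one]

  have hSth : Sᵀᴴ = Sᵀ := Matrix.IsHermitian.transpose hSh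
  have htrSS : (S * S).trace = ((d : ℝ) : ℂ) := by
    rw [hSdef, ← Matrix.mul_kronecker_mul, Matrix.one_mul, Matrix.trace_kronecker, htrs,
      Matrix.trace_one, one_mul]
    push_cast
    simp
  have htrSS' : (Sᵀ * Sᵀ).trace = ((d : ℝ) : ℂ) := by
    rw [← Matrix.transpose_mul, Matrix.trace_transpose, htrSS]
  -- Frobenius bounds
  have hF : (∑ i : Fin D × Fin d, ∑ j : Fin D × Fin d,
      ‖(S * M) i j‖ ^ 2) ≤ (d : ℝ) := by
    have h1 : ((S * M)ᴴ * (S * M)).trace = ((M * S)ᴴ * (M * S)).trace := by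
      rw [Matrix.conjTranspose_mul, Matrix.conjTranspose_mul, hMh, hSh,
        Matrix.trace_mul_comm]
    have h2 := proj_frob M S hM2 hMh hSh
    rw [← h1, trace_cts, htrSS] at h2
    exact Complex.real_le_real.mp h2
  have hG : (∑ i : Fin D × Fin d, ∑ j : Fin D × Fin d,
      ‖(N * Sᵀ) i j‖ ^ 2) ≤ (d : ℝ) := by
    have h2 := proj_frob N Sᵀ hN2 hNh hSth
    rw [trace_cts, htrSS'] at h2
    exact Complex.real_le_real.mp h2
  -- rewrite the sum using splitS
  rw [splitS D d (S * M) N s]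
  -- triangle inequality
  have habs : ‖∑ a : Fin D, ∑ c : Fin D, ∑ α : Fin d, ∑ β : Fin d,
        (S * M) (a,α) (c,β) * (N * Sᵀ) (a,β) (c,α)‖
      ≤ ∑ a : Fin D, ∑ c : Fin D, ∑ α : Fin d, ∑ β : Fin d,
          ‖(S * M) (a,α) (c,β)‖ * ‖(N * Sᵀ) (a,β) (c,α)‖ := by
    refine (norm_sum_le _ _).trans (Finset.sum_le_sum fun a _ => ?_)
    refine (norm_sum_le _ _).trans (Finset.sum_le_sum fun c _ => ?_)
    refine (norm_sum_le _ _).trans (Finset.sum_le_sum fun α _ => ?_)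
    refine (norm_sum_le _ _).trans (Finset.sum_le_sum fun β _ => ?_)
    exact le_of_eq (norm_mul _ _)
  refine habs.trans ?_
  -- Cauchy-Schwarz
  set Sg : ℝ := ∑ a : Fin D, ∑ c : Fin D, ∑ α : Fin d, ∑ β : Fin d,
      ‖(S * M) (a,α) (c,β)‖ * ‖(N * Sᵀ) (a,β) (c,α)‖ with hSgdef
  have hSg0 : 0 ≤ Sg := by
    refine Finset.sum_nonneg fun a _ => Finset.sum_nonneg fun c _ =>
      Finset.sum_nonneg fun α _ => Finset.sum_nonneg fun β _ => ?_
    positivity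
  have hCS : Sg ^ 2 ≤ (d : ℝ) * (d : ℝ) := by
    have flat : Sg = ∑ x : Fin D × Fin D × Fin d × Fin d,
        ‖(S * M) (x.1, x.2.2.1) (x.2.1, x.2.2.2)‖ *
          ‖(N * Sᵀ) (x.1, x.2.2.2) (x.2.1, x.2.2.1)‖ := by
      rw [hSgdef]
      simp only [Fintype.sum_prod_type]
    have key := Finset.sum_mul_sq_le_sq_mul_sq Finset.univ
      (fun x : Fin D × Fin D × Fin d × Fin d =>
        ‖(S * M) (x.1, x.2.2.1) (x.2.1, x.2.2.2)‖)
      (fun x : Fin D × Fin D × Fin d × Fin d =>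
        ‖(N * Sᵀ) (x.1, x.2.2.2) (x.2.1, x.2.2.1)‖)
    rw [flat]
    refine key.trans ?_
    have e1 : (∑ x : Fin D × Fin D × Fin d × Fin d,
        ‖(S * M) (x.1, x.2.2.1) (x.2.1, x.2.2.2)‖ ^ 2)
        = ∑ i : Fin D × Fin d, ∑ j : Fin D × Fin d, ‖(S * M) i j‖ ^ 2 := by
      rw [← frob_reorder]
      simp only [Fintype.sum_prod_type]
    have e2 : (∑ x : Fin D × Fin D × Fin d × Fin d,
        ‖(N * Sᵀ) (x.1, x.2.2.2) (x.2.1, x.2.2.1)‖ ^ 2)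
        = ∑ i : Fin D × Fin d, ∑ j : Fin D × Fin d, ‖(N * Sᵀ) i j‖ ^ 2 := by
      rw [← frob_reorder]
      simp only [Fintype.sum_prod_type]
      exact Finset.sum_congr rfl fun a _ => Finset.sum_congr rfl fun c _ =>
        Finset.sum_comm
    rw [e1, e2]
    have h1 : (0:ℝ) ≤ ∑ i : Fin D × Fin d, ∑ j : Fin D × Fin d,
        ‖(N * Sᵀ) i j‖ ^ 2 :=
      Finset.sum_nonneg fun i _ => Finset.sum_nonneg fun j _ => sq_nonneg _
    have h2 : (0:ℝ) ≤ ∑ i : Fin D × Fin d, ∑ j : Fin D × Fin d,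
        ‖(S * M) i j‖ ^ 2 :=
      Finset.sum_nonneg fun i _ => Finset.sum_nonneg fun j _ => sq_nonneg _
    nlinarith [hF, hG]
  have hSgd : Sg ≤ (d : ℝ) := by nlinarith [hSg0, hCS, Nat.cast_nonneg (α := ℝ) d]
  refine hSgd.trans ?_
  rcases Nat.eq_zero_or_pos d with h | h
  · simp [h]
  · have h1 : (1:ℝ) ≤ Real.sqrt d := by
      rw [show (1:ℝ) = Real.sqrt 1 from Real.sqrt_one.symm]
      exact Real.sqrt_le_sqrt (by exact_mod_cast h)
    nlinarith [Nat.cast_nonneg (α := ℝ) d]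

/-- Key bound of the single-copy simultaneous Haar indistinguishability theorem:
|Tr[((σ^{1/2}⊗id) M (σ^{1/2}⊗id) ⊗ N)(Ω ⊗ F)]| ≤ d^{3/2} for projections M, N
and any density matrix σ. -/
theorem haar_single_copy_key_bound (D d : ℕ)
    (M N : Matrix (Fin D × Fin d) (Fin D × Fin d) ℂ)
    (hM2 : M * M = M) (hMh : M.conjTranspose = M)
    (hN2 : N * N = N) (hNh : N.conjTranspose = N)
    (σ : Matrix (Fin D) (Fin D) ℂ) (hσ : σ.PosSemidef) (htr : σ.trace = 1) :
    ‖(((((posSemidefSqrt hσ ⊗ₖ (1 : Matrix (Fin d) (Fin d) ℂ)) * M *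
            (posSemidefSqrt hσ ⊗ₖ (1 : Matrix (Fin d) (Fin d) ℂ))) ⊗ₖ N) *
        (Matrix.reindex (Equiv.prodProdProdComm (Fin D) (Fin D) (Fin d) (Fin d))
          (Equiv.prodProdProdComm (Fin D) (Fin D) (Fin d) (Fin d))
          (maxEnt D ⊗ₖ swapOp d)))).trace‖
      ≤ (d : ℝ) * Real.sqrt (d : ℝ) := by
  rw [trace_formula]
  have hsh : (posSemidefSqrt hσ)ᴴ = posSemidefSqrt hσ := by
    unfold posSemidefSqrt
    simp only [Matrix.star_eq_conjTranspose, Matrix.conjTranspose_mul,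
      Matrix.conjTranspose_conjTranspose, Matrix.diagonal_conjTranspose, Matrix.mul_assoc]
    have hv : star ((↑) ∘ Real.sqrt ∘ hσ.1.eigenvalues : Fin D → ℂ)
        = ((↑) ∘ Real.sqrt ∘ hσ.1.eigenvalues : Fin D → ℂ) := by
      funext i; simp
    rw [hv]
  have htrs : (posSemidefSqrt hσ * posSemidefSqrt hσ).trace = 1 := by
    unfold posSemidefSqrt
    set U := (hσ.1.eigenvectorUnitary : Matrix (Fin D) (Fin D) ℂ) with hUdef
    have hU : star U * U = 1 := Unitary.star_mul_self_of_mem hσ.1.eigenvectorUnitary.2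
    simp only [Matrix.mul_assoc]
    rw [← Matrix.mul_assoc (star U) U, hU, Matrix.one_mul, Matrix.trace_mul_comm,
      Matrix.mul_assoc _ (_ * star U) U, Matrix.mul_assoc _ (star U) U, hU, Matrix.mul_one, Matrix.diagonal_mul_diagonal,
      Matrix.trace_diagonal, ← htr, hσ.1.trace_eq_sum_eigenvalues]
    exact Finset.sum_congr rfl fun i _ => by
      simp only [Function.comp, ← Complex.ofReal_mul, Real.mul_self_sqrt (hσ.eigenvalues_nonneg i)]
      rfl
  exact main_bound D d M N hM2 hMh hN2 hNh (posSemidefSqrt hσ) hsh htrs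
end
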